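/- arXiv:1812.04321 — 2 statements merged into one kernel-verified Lean document; each statement's English description precedes it below -/
import Mathlib

section
/- Let H = ℤⁿ with a negative definite symmetric integer matrix (Eᵢ·Eⱼ) such that Eᵢ·Eⱼ ≥ 0 for i ≠ j, and assume the associated graph is connected. Then there exists a unique smallest positive cycle Z > 0 (componentwise minimal among positive cycles) with Eᵢ·Z ≤ 0 for all i (the fundamental cycle): the set of positive cycles D with Eᵢ·D ≤ 0 for all i is nonempty and closed under componentwise minimum. -/
namespace Stmt3Aux

open Matrix

variable {n : ℕ}

/-- Quadratic form rewrite. -/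
lemma qform (M : Matrix (Fin n) (Fin n) ℤ) (y : Fin n → ℤ) :
    ∑ i, ∑ j, y i * M i j * y j = ∑ i, y i * ∑ j, M i j * y j := by
  refine Finset.sum_congr rfl fun i _ => ?_
  rw [Finset.mul_sum]
  exact Finset.sum_congr rfl fun j _ => by ring

/-- Lemma A: if `M x ≤ 0` componentwise then `x ≥ 0`. -/
lemma lemA (M : Matrix (Fin n) (Fin n) ℤ)
    (hneg : ∀ x : Fin n → ℤ, x ≠ 0 → ∑ i, ∑ j, x i * M i j * x j < 0)
    (hoff : ∀ i j, i ≠ j → 0 ≤ M i j)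
    {x : Fin n → ℤ} (hx : ∀ i, ∑ j, M i j * x j ≤ 0) : ∀ i, 0 ≤ x i := by
  set y : Fin n → ℤ := fun i => min (x i) 0 with hy
  have hyle : ∀ i, y i ≤ x i := fun i => min_le_left _ _
  have key : ∀ i, 0 ≤ y i * ∑ j, M i j * y j := by
    intro i
    rcases le_or_gt 0 (x i) with h | h
    · have h0 : y i = 0 := min_eq_right h
      simp [h0]
    · have hyi : y i = x i := min_eq_left h.le
      have hsum : ∑ j, M i j * y j ≤ ∑ j, M i j * x j := by
        apply Finset.sum_le_sum
        intro j _
        rcases eq_or_ne j i with rfl | hj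
        · rw [hyi]
        · exact mul_le_mul_of_nonneg_left (hyle j) (hoff i j (Ne.symm hj))
      have h2 : ∑ j, M i j * y j ≤ 0 := hsum.trans (hx i)
      have h3 : y i ≤ 0 := hyi ▸ h.le
      nlinarith
  have hQ : 0 ≤ ∑ i, ∑ j, y i * M i j * y j := by
    rw [qform]
    exact Finset.sum_nonneg fun i _ => key i
  have hy0 : y = 0 := by
    by_contra h
    exact absurd (hneg y h) (not_lt.mpr hQ)
  intro i
  have h := congrFun hy0 i
  simp only [hy, Pi.zero_apply] at h
  omega

/-- Lemma B: a nonzero nonnegative solution is strictly positive (connectedness). -/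
lemma lemB (M : Matrix (Fin n) (Fin n) ℤ)
    (hoff : ∀ i j, i ≠ j → 0 ≤ M i j)
    (hconn : ∀ i j : Fin n,
      Relation.ReflTransGen (fun i j : Fin n => i ≠ j ∧ M i j ≠ 0) i j)
    {x : Fin n → ℤ} (hx0 : ∀ i, 0 ≤ x i) (hxne : x ≠ 0)
    (hx : ∀ i, ∑ j, M i j * x j ≤ 0) : ∀ i, 0 < x i := by
  obtain ⟨k, hk⟩ := Function.ne_iff.mp hxne
  simp only [Pi.zero_apply] at hk
  have hk' : 0 < x k := lt_of_le_of_ne (hx0 k) (Ne.symm hk)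
  intro i
  induction hconn i k using Relation.ReflTransGen.head_induction_on with
  | refl => exact hk'
  | head h' hpath ih =>
    rename_i a c
    rcases (hx0 a).lt_or_eq with h | h
    · exact h
    · exfalso
      have hpos : 0 < ∑ j, M a j * x j := by
        apply Finset.sum_pos'
        · intro j _
          rcases eq_or_ne j a with rfl | hj
          · rw [← h, mul_zero]
          · exact mul_nonneg (hoff a j (Ne.symm hj)) (hx0 j)
        · exact ⟨c, Finset.mem_univ c,
            mul_pos (lt_of_le_of_ne (hoff a c h'.1) (Ne.symm h'.2)) ih⟩
      exact absurd (hx a) (not_le.mpr hpos)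

/-- Clearing denominators. -/
lemma clearDen (x : Fin n → ℚ) :
    ∃ (d : ℕ) (y : Fin n → ℤ), 0 < d ∧ ∀ i, (y i : ℚ) = d * x i := by
  refine ⟨∏ i, (x i).den,
    fun i => (x i).num * (((∏ i, (x i).den) / (x i).den : ℕ) : ℤ),
    Finset.prod_pos fun i _ => (x i).pos, fun i => ?_⟩
  have hdvd : (x i).den ∣ ∏ i, (x i).den := Finset.dvd_prod_of_mem _ (Finset.mem_univ i)
  have h1 : ((x i).den : ℚ) * (((∏ i, (x i).den) / (x i).den : ℕ) : ℚ)
      = ((∏ i, (x i).den : ℕ) : ℚ) := by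
    rw [← Nat.cast_mul, Nat.mul_div_cancel' hdvd]
  have hden : ((x i).den : ℚ) ≠ 0 := Nat.cast_ne_zero.mpr (x i).pos.ne'
  have h2 : ((x i).num : ℚ) = x i * (x i).den :=
    (div_eq_iff hden).mp (Rat.num_div_den (x i))
  rw [Int.cast_mul, Int.cast_natCast, h2, mul_assoc, h1]
  ring

/-- The determinant of `M` over `ℚ` is nonzero. -/
lemma detNe (M : Matrix (Fin n) (Fin n) ℤ)
    (hneg : ∀ x : Fin n → ℤ, x ≠ 0 → ∑ i, ∑ j, x i * M i j * x j < 0) :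
    (M.map (Int.cast : ℤ → ℚ)).det ≠ 0 := by
  intro h
  obtain ⟨v, hv, hMv⟩ := Matrix.exists_mulVec_eq_zero_iff.mpr h
  obtain ⟨d, y, hd, hy⟩ := clearDen v
  have hdQ : (d : ℚ) ≠ 0 := Nat.cast_ne_zero.mpr hd.ne'
  have hyne : y ≠ 0 := by
    intro h0
    apply hv
    funext i
    have := hy i
    rw [h0] at this
    simp only [Pi.zero_apply, Int.cast_zero] at this
    exact (mul_eq_zero.mp this.symm).resolve_left hdQ
  have hzero : ∀ i, ∑ j, M i j * y j = 0 := by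
    intro i
    have hcast : ((∑ j, M i j * y j : ℤ) : ℚ) = ((0 : ℤ) : ℚ) := by
      push_cast
      calc ∑ j, (M i j : ℚ) * (y j : ℚ)
          = ∑ j, (M i j : ℚ) * ((d : ℚ) * v j) := by
            refine Finset.sum_congr rfl fun j _ => by rw [hy j]
        _ = (d : ℚ) * ∑ j, (M.map (Int.cast : ℤ → ℚ)) i j * v j := by
            rw [Finset.mul_sum]
            refine Finset.sum_congr rfl fun j _ => ?_
            simp [Matrix.map_apply]; ring
        _ = (d : ℚ) * ((M.map (Int.cast : ℤ → ℚ)) *ᵥ v) i := by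
            simp [Matrix.mulVec, dotProduct]
        _ = 0 := by rw [hMv]; simp
    exact_mod_cast hcast
  have h1 := hneg y hyne
  rw [qform] at h1
  have h2 : ∑ i, y i * ∑ j, M i j * y j = 0 := by
    refine Finset.sum_eq_zero fun i _ => ?_
    rw [hzero i, mul_zero]
  rw [h2] at h1
  exact lt_irrefl 0 h1

/-- Existence of a positive cycle. -/
lemma exist (hn : 0 < n) (M : Matrix (Fin n) (Fin n) ℤ)
    (hneg : ∀ x : Fin n → ℤ, x ≠ 0 → ∑ i, ∑ j, x i * M i j * x j < 0)
    (hoff : ∀ i j, i ≠ j → 0 ≤ M i j) :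
    ∃ D : Fin n → ℤ, (∀ i, 0 ≤ D i) ∧ D ≠ 0 ∧ ∀ i, ∑ j, M i j * D j ≤ 0 := by
  set M' := M.map (Int.cast : ℤ → ℚ) with hM'
  have hdet := detNe M hneg
  have hunit : IsUnit M'.det := isUnit_iff_ne_zero.mpr hdet
  set x : Fin n → ℚ := M'⁻¹ *ᵥ (fun _ => -1) with hxdef
  have hx : M' *ᵥ x = fun _ => -1 := by
    rw [hxdef, Matrix.mulVec_mulVec, Matrix.mul_nonsing_inv _ hunit, Matrix.one_mulVec]
  obtain ⟨d, y, hd, hy⟩ := clearDen x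
  have hsum : ∀ i, ∑ j, M i j * y j = -(d : ℤ) := by
    intro i
    have hcast : ((∑ j, M i j * y j : ℤ) : ℚ) = ((-(d : ℤ) : ℤ) : ℚ) := by
      push_cast
      calc ∑ j, (M i j : ℚ) * (y j : ℚ)
          = ∑ j, (M i j : ℚ) * ((d : ℚ) * x j) := by
            refine Finset.sum_congr rfl fun j _ => by rw [hy j]
        _ = (d : ℚ) * ∑ j, M' i j * x j := by
            rw [Finset.mul_sum]
            refine Finset.sum_congr rfl fun j _ => ?_
            simp [hM', Matrix.map_apply]; ring
        _ = (d : ℚ) * (M' *ᵥ x) i := by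
            simp [Matrix.mulVec, dotProduct]
        _ = -(d : ℚ) := by rw [hx]; ring
    exact_mod_cast hcast
  have hle : ∀ i, ∑ j, M i j * y j ≤ 0 := fun i => by
    rw [hsum i]; omega
  have hyne : y ≠ 0 := by
    intro h0
    have h1 := hsum ⟨0, hn⟩
    rw [h0] at h1
    simp only [Pi.zero_apply, mul_zero, Finset.sum_const_zero] at h1
    omega
  exact ⟨y, lemA M hneg hoff hle, hyne, hle⟩

/-- Step of closure under minimum. -/
lemma minClose (M : Matrix (Fin n) (Fin n) ℤ)
    (hoff : ∀ i j, i ≠ j → 0 ≤ M i j) {D₁ D₂ : Fin n → ℤ} (i : Fin n)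
    (hle : D₁ i ≤ D₂ i) (h1 : ∑ j, M i j * D₁ j ≤ 0) :
    ∑ j, M i j * min (D₁ j) (D₂ j) ≤ 0 := by
  refine le_trans (Finset.sum_le_sum fun j _ => ?_) h1
  rcases eq_or_ne j i with rfl | hj
  · rw [min_eq_left hle]
  · exact mul_le_mul_of_nonneg_left (min_le_left _ _) (hoff i j (Ne.symm hj))

end Stmt3Aux

open Stmt3Aux in
/-- existence and uniqueness of the fundamental cycle.  For a
negative definite symmetric integer matrix with nonnegative off-diagonal
entries and connected graph, the set of positive cycles `D` with `Eᵢ·D ≤ 0`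
for all `i` is nonempty, closed under componentwise minimum, and has a unique
smallest element (the fundamental cycle). -/
theorem stmt_3 (n : ℕ) (hn : 0 < n) (M : Matrix (Fin n) (Fin n) ℤ)
    (hsym : M.IsSymm)
    (hneg : ∀ x : Fin n → ℤ, x ≠ 0 → ∑ i, ∑ j, x i * M i j * x j < 0)
    (hoff : ∀ i j, i ≠ j → 0 ≤ M i j)
    (hconn : ∀ i j : Fin n,
      Relation.ReflTransGen (fun i j : Fin n => i ≠ j ∧ M i j ≠ 0) i j) :
    (∃ D : Fin n → ℤ, (∀ i, 0 ≤ D i) ∧ D ≠ 0 ∧ ∀ i, ∑ j, M i j * D j ≤ 0) ∧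
    (∀ D₁ D₂ : Fin n → ℤ,
      ((∀ i, 0 ≤ D₁ i) ∧ D₁ ≠ 0 ∧ ∀ i, ∑ j, M i j * D₁ j ≤ 0) →
      ((∀ i, 0 ≤ D₂ i) ∧ D₂ ≠ 0 ∧ ∀ i, ∑ j, M i j * D₂ j ≤ 0) →
      ((∀ i, 0 ≤ min (D₁ i) (D₂ i)) ∧ (fun i => min (D₁ i) (D₂ i)) ≠ 0 ∧
        ∀ i, ∑ j, M i j * min (D₁ j) (D₂ j) ≤ 0)) ∧
    (∃! Z : Fin n → ℤ,
      ((∀ i, 0 ≤ Z i) ∧ Z ≠ 0 ∧ ∀ i, ∑ j, M i j * Z j ≤ 0) ∧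
      ∀ D : Fin n → ℤ,
        ((∀ i, 0 ≤ D i) ∧ D ≠ 0 ∧ ∀ i, ∑ j, M i j * D j ≤ 0) →
        ∀ i, Z i ≤ D i) := by
  classical
  have hex := exist hn M hneg hoff
  have hmin : ∀ D₁ D₂ : Fin n → ℤ,
      ((∀ i, 0 ≤ D₁ i) ∧ D₁ ≠ 0 ∧ ∀ i, ∑ j, M i j * D₁ j ≤ 0) →
      ((∀ i, 0 ≤ D₂ i) ∧ D₂ ≠ 0 ∧ ∀ i, ∑ j, M i j * D₂ j ≤ 0) →
      ((∀ i, 0 ≤ min (D₁ i) (D₂ i)) ∧ (fun i => min (D₁ i) (D₂ i)) ≠ 0 ∧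
        ∀ i, ∑ j, M i j * min (D₁ j) (D₂ j) ≤ 0) := by
    intro D₁ D₂ h₁ h₂
    have hp₁ := lemB M hoff hconn h₁.1 h₁.2.1 h₁.2.2
    have hp₂ := lemB M hoff hconn h₂.1 h₂.2.1 h₂.2.2
    refine ⟨fun i => le_min (h₁.1 i) (h₂.1 i), ?_, ?_⟩
    · intro h0
      have := congrFun h0 ⟨0, hn⟩
      simp only [Pi.zero_apply] at this
      have := lt_min (hp₁ ⟨0, hn⟩) (hp₂ ⟨0, hn⟩)
      omega
    · intro i
      rcases le_total (D₁ i) (D₂ i) with hle | hle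
      · exact minClose M hoff i hle (h₁.2.2 i)
      · have h := minClose M hoff (D₁ := D₂) (D₂ := D₁) i hle (h₂.2.2 i)
        calc ∑ j, M i j * min (D₁ j) (D₂ j)
            = ∑ j, M i j * min (D₂ j) (D₁ j) := by
              refine Finset.sum_congr rfl fun j _ => by rw [min_comm]
          _ ≤ 0 := h
  refine ⟨hex, hmin, ?_⟩
  -- unique smallest element
  set valid : (Fin n → ℤ) → Prop :=
    fun D => (∀ i, 0 ≤ D i) ∧ D ≠ 0 ∧ ∀ i, ∑ j, M i j * D j ≤ 0 with hvalid
  set s : (Fin n → ℤ) → ℕ := fun D => ∑ i, (D i).toNat with hs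
  have hP : ∃ k : ℕ, ∃ D, valid D ∧ s D = k := by
    obtain ⟨D, hD⟩ := hex
    exact ⟨s D, D, hD, rfl⟩
  obtain ⟨Z, hZ, hsZ⟩ := Nat.find_spec hP
  have hsmall : ∀ D : Fin n → ℤ, valid D → ∀ i, Z i ≤ D i := by
    intro D hD i
    have hW := hmin Z D hZ hD
    set W : Fin n → ℤ := fun i => min (Z i) (D i) with hWdef
    have hWle : ∀ j, (W j).toNat ≤ (Z j).toNat :=
      fun j => Int.toNat_le_toNat (min_le_left _ _)
    have h1 : s W ≤ s Z := Finset.sum_le_sum fun j _ => hWle j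
    have h2 : Nat.find hP ≤ s W := Nat.find_min' hP ⟨W, hW, rfl⟩
    have h3 : s W = s Z := le_antisymm h1 (hsZ ▸ h2)
    have h4 : ∀ j ∈ Finset.univ, (W j).toNat = (Z j).toNat :=
      (Finset.sum_eq_sum_iff_of_le fun j _ => hWle j).mp h3
    have h5 := h4 i (Finset.mem_univ i)
    have h6 : 0 ≤ Z i := hZ.1 i
    have h7 : 0 ≤ D i := hD.1 i
    simp only [hWdef] at h5
    omega
  refine ⟨Z, ⟨hZ, hsmall⟩, ?_⟩
  intro Z' hZ'
  funext i
  exact le_antisymm (hZ'.2 Z hZ i) (hsmall Z' hZ'.1 i)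
end

section
/- The affine surface in ℂ⁴ with coordinates (z, z̄, w, v) defined by w² = z̄³ + v z² and v² = z³ + w z̄² is a complete intersection with an isolated singularity at the origin. -/
/-!
At a point of the surface the three 2×2 minors of the Jacobian in the column pairs
`(z, v)`, `(z̄, w)`, `(w, v)` reduce, after substituting the equations, to
`-(7z⁴ + 4wz z̄²)`, `7z̄⁴ + 4vz²z̄` and `4wv - z²z̄²`. If all three vanish, eliminating
`w` and `v` gives `(z z̄)⁴ (4 z z̄ - 49) = 0`. The factor `z z̄` can only vanish at the
origin, and `4 z z̄ = 49` is impossible in the unit polydisc.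
-/

lemma linearIndependent_pair_of_minor_ne_zero {ι R : Type*} [CommRing R] [NoZeroDivisors R]
    (x y : ι → R) (i j : ι) (h : x i * y j - x j * y i ≠ 0) :
    LinearIndependent R ![x, y] := by
  rw [LinearIndependent.pair_iff]
  intro s t hst
  have hi : s * x i + t * y i = 0 := by simpa using congrFun hst i
  have hj : s * x j + t * y j = 0 := by simpa using congrFun hst j
  constructor
  · refine (mul_eq_zero.1 (?_ : s * (x i * y j - x j * y i) = 0)).resolve_right h
    linear_combination y j * hi - y i * hj
  · refine (mul_eq_zero.1 (?_ : t * (x i * y j - x j * y i) = 0)).resolve_right h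
    linear_combination x i * hj - x j * hi

section Splice

variable {K : Type*} [Field K] {z zb w v : K}

lemma splice_eq_zero_of_mul_eq_zero (h7 : (7 : K) ≠ 0)
    (hw : w ^ 2 = zb ^ 3 + v * z ^ 2) (hv : v ^ 2 = z ^ 3 + w * zb ^ 2)
    (hA : -2 * v * z * (2 * v) - -z ^ 2 * (-3 * z ^ 2) = 0)
    (hB : -3 * zb ^ 2 * -zb ^ 2 - 2 * w * (-2 * w * zb) = 0) (hzzb : z * zb = 0) :
    z = 0 ∧ zb = 0 ∧ w = 0 ∧ v = 0 := by
  have hboth : z = 0 ∧ zb = 0 := by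
    rcases mul_eq_zero.1 hzzb with hz | hzb
    · subst hz
      have : 7 * zb ^ 4 = 0 := by linear_combination hB - 4 * zb * hw
      exact ⟨rfl, pow_eq_zero_iff four_ne_zero |>.mp ((mul_eq_zero.1 this).resolve_left h7)⟩
    · subst hzb
      have : 7 * z ^ 4 = 0 := by linear_combination -hA - 4 * z * hv
      exact ⟨pow_eq_zero_iff four_ne_zero |>.mp ((mul_eq_zero.1 this).resolve_left h7), rfl⟩
  obtain ⟨rfl, rfl⟩ := hboth
  refine ⟨rfl, rfl, pow_eq_zero_iff two_ne_zero |>.mp ?_, pow_eq_zero_iff two_ne_zero |>.mp ?_⟩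
  · linear_combination hw
  · linear_combination hv

lemma splice_eq_zero_or_of_minors_eq_zero (h7 : (7 : K) ≠ 0)
    (hw : w ^ 2 = zb ^ 3 + v * z ^ 2) (hv : v ^ 2 = z ^ 3 + w * zb ^ 2)
    (hA : -2 * v * z * (2 * v) - -z ^ 2 * (-3 * z ^ 2) = 0)
    (hB : -3 * zb ^ 2 * -zb ^ 2 - 2 * w * (-2 * w * zb) = 0)
    (hC : 2 * w * (2 * v) - -z ^ 2 * -zb ^ 2 = 0) :
    (z = 0 ∧ zb = 0 ∧ w = 0 ∧ v = 0) ∨ 4 * z * zb = 49 := by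
  have hA' : 7 * z ^ 4 + 4 * w * z * zb ^ 2 = 0 := by linear_combination -hA - 4 * z * hv
  have hB' : 7 * zb ^ 4 + 4 * v * z ^ 2 * zb = 0 := by linear_combination hB - 4 * zb * hw
  have key : (z * zb) ^ 4 * (4 * z * zb - 49) = 0 := by
    linear_combination 4 * v * z ^ 2 * zb * hA' - 4 * z ^ 3 * zb ^ 3 * hC - 7 * z ^ 4 * hB'
  rcases mul_eq_zero.1 key with h | h
  · exact .inl (splice_eq_zero_of_mul_eq_zero h7 hw hv hA hB (pow_eq_zero_iff four_ne_zero |>.mp h))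
  · exact .inr (sub_eq_zero.1 h)

end Splice

/-- The surface in `ℂ⁴` (coordinates `(z, z̄, w, v)`) defined by
the two splice equations `w² = z̄³ + v·z²` and `v² = z³ + w·z̄²` is a complete
intersection (cut out by exactly these two equations) with an isolated
singularity at the origin: at every nearby nonzero solution the two gradient
vectors are linearly independent, i.e. the Jacobian has maximal rank 2. -/
theorem stmt_18 :
    ∃ ε > (0 : ℝ), ∀ z zb w v : ℂ,
      ‖z‖ < ε → ‖zb‖ < ε → ‖w‖ < ε →
      ‖v‖ < ε →
      ¬(z = 0 ∧ zb = 0 ∧ w = 0 ∧ v = 0) →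
      w ^ 2 = zb ^ 3 + v * z ^ 2 →
      v ^ 2 = z ^ 3 + w * zb ^ 2 →
      LinearIndependent ℂ
        ![![-2 * v * z, -3 * zb ^ 2, 2 * w, -z ^ 2],
          ![-3 * z ^ 2, -2 * w * zb, -zb ^ 2, 2 * v]] := by
  refine ⟨1, one_pos, fun z zb w v hz hzb _ _ hne hw hv => ?_⟩
  by_contra hdep
  have hminor (i j : Fin 4) := not_not.1 (mt (linearIndependent_pair_of_minor_ne_zero
    ![-2 * v * z, -3 * zb ^ 2, 2 * w, -z ^ 2] ![-3 * z ^ 2, -2 * w * zb, -zb ^ 2, 2 * v] i j) hdep)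
  rcases splice_eq_zero_or_of_minors_eq_zero (by norm_num) hw hv (hminor 0 3) (hminor 1 2)
    (hminor 2 3) with h0 | h49
  · exact hne h0
  · have : ‖(4 : ℂ) * z * zb‖ < 49 := by
      rw [norm_mul, norm_mul, Complex.norm_ofNat]
      nlinarith [norm_nonneg z, norm_nonneg zb]
    rw [h49] at this
    norm_num at this
end
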